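/- arXiv:nlin/0610045 — 2 statements merged into one kernel-verified Lean document; each statement's English description precedes it below -/
import Mathlib

section
/- Let φ : ℝ³ → Mₙ(ℝ) be infinitely differentiable and satisfy the first two equations of the opposite noncommutative Burgers hierarchy, φ_y = −φ_xx − 2φ φ_x and φ_t = φ_xxx + 3φ φ_xx + 3φ_x² + 3φ² φ_x. Then φ satisfies the noncommutative potential KP equation ∂_x(4φ_t − φ_xxx − 6φ_x²) − 3φ_yy + 6(φ_x φ_y − φ_y φ_x) = 0. -/
attribute [local instance] Matrix.normedAddCommGroup Matrix.normedSpace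

/-- Partial derivative in the `x`-direction of a function of three real variables. -/
noncomputable def pdx {E : Type*} [NormedAddCommGroup E] [NormedSpace ℝ E]
    (f : ℝ × ℝ × ℝ → E) : ℝ × ℝ × ℝ → E :=
  fun p => fderiv ℝ f p (1, 0, 0)

/-- Partial derivative in the `y`-direction of a function of three real variables. -/
noncomputable def pdy {E : Type*} [NormedAddCommGroup E] [NormedSpace ℝ E]
    (f : ℝ × ℝ × ℝ → E) : ℝ × ℝ × ℝ → E :=
  fun p => fderiv ℝ f p (0, 1, 0)

/-- Partial derivative in the `t`-direction of a function of three real variables. -/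
noncomputable def pdt {E : Type*} [NormedAddCommGroup E] [NormedSpace ℝ E]
    (f : ℝ × ℝ × ℝ → E) : ℝ × ℝ × ℝ → E :=
  fun p => fderiv ℝ f p (0, 0, 1)

noncomputable def pd {E : Type*} [NormedAddCommGroup E] [NormedSpace ℝ E]
    (v : ℝ × ℝ × ℝ) (f : ℝ × ℝ × ℝ → E) : ℝ × ℝ × ℝ → E :=
  fun p => fderiv ℝ f p v

section lemmas
variable {E : Type*} [NormedAddCommGroup E] [NormedSpace ℝ E]
variable {f g : ℝ × ℝ × ℝ → E} {v w : ℝ × ℝ × ℝ} {p : ℝ × ℝ × ℝ}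

theorem pd_contDiff (hf : ContDiff ℝ (⊤ : ℕ∞) f) : ContDiff ℝ (⊤ : ℕ∞) (pd v f) :=
  (hf.fderiv_right (by simp)).clm_apply contDiff_const

theorem pd_add (hf : DifferentiableAt ℝ f p) (hg : DifferentiableAt ℝ g p) :
    pd v (fun q => f q + g q) p = pd v f p + pd v g p := by
  simp [pd, fderiv_fun_add hf hg]

theorem pd_neg : pd v (fun q => -f q) p = -pd v f p := by
  simp [pd, fderiv_neg]

theorem pd_sub (hf : DifferentiableAt ℝ f p) (hg : DifferentiableAt ℝ g p) :
    pd v (fun q => f q - g q) p = pd v f p - pd v g p := by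
  simp [pd, fderiv_fun_sub hf hg]

theorem pd_smul (c : ℝ) (hf : DifferentiableAt ℝ f p) :
    pd v (fun q => c • f q) p = c • pd v f p := by
  simp [pd, fderiv_fun_const_smul hf c]

theorem pd_comm (hf : ContDiff ℝ (⊤ : ℕ∞) f) :
    pd v (pd w f) p = pd w (pd v f) p := by
  have hd : DifferentiableAt ℝ (fderiv ℝ f) p :=
    ((hf.fderiv_right (m := (⊤ : ℕ∞)) (by simp)).differentiable (by simp)).differentiableAt
  have key : ∀ a b : ℝ × ℝ × ℝ, pd a (pd b f) p = fderiv ℝ (fderiv ℝ f) p a b := by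
    intro a b
    have h1 : HasFDerivAt (fun q => fderiv ℝ f q b)
        ((ContinuousLinearMap.apply ℝ E b).comp (fderiv ℝ (fderiv ℝ f) p)) p :=
      (ContinuousLinearMap.apply ℝ E b).hasFDerivAt.comp p hd.hasFDerivAt
    show fderiv ℝ (fun q => fderiv ℝ f q b) p a = _
    rw [h1.fderiv]
    rfl
  rw [key, key]
  exact (hf.contDiffAt.isSymmSndFDerivAt (by rw [minSmoothness_of_isRCLikeNormedField]; exact WithTop.coe_le_coe.mpr (le_top : (2 : ℕ∞) ≤ ⊤))) v w

end lemmas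

section matrixlemmas
variable {n : ℕ}

noncomputable def mulCLM (n : ℕ) :
    Matrix (Fin n) (Fin n) ℝ →L[ℝ] Matrix (Fin n) (Fin n) ℝ →L[ℝ] Matrix (Fin n) (Fin n) ℝ :=
  LinearMap.toContinuousLinearMap
    ((LinearMap.toContinuousLinearMap :
        (Matrix (Fin n) (Fin n) ℝ →ₗ[ℝ] Matrix (Fin n) (Fin n) ℝ) ≃ₗ[ℝ]
        (Matrix (Fin n) (Fin n) ℝ →L[ℝ] Matrix (Fin n) (Fin n) ℝ)).toLinearMap.comp
      (LinearMap.mul ℝ (Matrix (Fin n) (Fin n) ℝ)))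

@[simp] theorem mulCLM_apply (A B : Matrix (Fin n) (Fin n) ℝ) : mulCLM n A B = A * B := rfl

variable {f g : ℝ × ℝ × ℝ → Matrix (Fin n) (Fin n) ℝ} {v : ℝ × ℝ × ℝ} {p : ℝ × ℝ × ℝ}

theorem contDiff_matmul (hf : ContDiff ℝ (⊤ : ℕ∞) f) (hg : ContDiff ℝ (⊤ : ℕ∞) g) :
    ContDiff ℝ (⊤ : ℕ∞) (fun q => f q * g q) :=
  ContDiff.comp (f := fun q => (f q, g q)) ((mulCLM n).isBoundedBilinearMap.contDiff) (hf.prodMk hg)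

theorem pd_mul (hf : DifferentiableAt ℝ f p) (hg : DifferentiableAt ℝ g p) :
    pd v (fun q => f q * g q) p = pd v f p * g p + f p * pd v g p := by
  have h := ((mulCLM n).hasFDerivAt_of_bilinear hf.hasFDerivAt hg.hasFDerivAt).fderiv
  show fderiv ℝ (fun q => f q * g q) p v = _
  rw [show (fun q => f q * g q) = (fun q => mulCLM n (f q) (g q)) from rfl]
  refine (DFunLike.congr_fun h v).trans ?_
  simp [pd, ContinuousLinearMap.precompR, ContinuousLinearMap.precompL, add_comm]
  rfl

end matrixlemmas

theorem pdx_eq {E : Type*} [NormedAddCommGroup E] [NormedSpace ℝ E] (f : ℝ × ℝ × ℝ → E) :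
    pdx f = pd (1, 0, 0) f := rfl

theorem pdy_eq {E : Type*} [NormedAddCommGroup E] [NormedSpace ℝ E] (f : ℝ × ℝ × ℝ → E) :
    pdy f = pd (0, 1, 0) f := rfl

theorem pdt_eq {E : Type*} [NormedAddCommGroup E] [NormedSpace ℝ E] (f : ℝ × ℝ × ℝ → E) :
    pdt f = pd (0, 0, 1) f := rfl

/-- Any solution of the first two equations of the opposite noncommutative
Burgers hierarchy also solves the noncommutative potential KP equation. -/
theorem pKP_of_opposite_burgers (n : ℕ) (φ : ℝ × ℝ × ℝ → Matrix (Fin n) (Fin n) ℝ)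
    (hφ : ContDiff ℝ (⊤ : ℕ∞) φ)
    (hb1 : ∀ p, pdy φ p = - pdx (pdx φ) p - 2 • (φ p * pdx φ p))
    (hb2 : ∀ p, pdt φ p = pdx (pdx (pdx φ)) p + 3 • (φ p * pdx (pdx φ) p)
        + 3 • (pdx φ p * pdx φ p) + 3 • ((φ p * φ p) * pdx φ p)) :
    ∀ p, pdx (fun q => (4 : ℝ) • pdt φ q - pdx (pdx (pdx φ)) q
          - (6 : ℝ) • (pdx φ q * pdx φ q)) p
        - (3 : ℝ) • pdy (pdy φ) p
        + (6 : ℝ) • (pdx φ p * pdy φ p - pdy φ p * pdx φ p) = 0 := by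
  intro p
  simp only [pdx_eq, pdy_eq, pdt_eq] at hb1 hb2 ⊢
  have dd : ∀ {f : ℝ × ℝ × ℝ → Matrix (Fin n) (Fin n) ℝ}, ContDiff ℝ (⊤ : ℕ∞) f →
      ∀ q, DifferentiableAt ℝ f q :=
    fun hf q => (hf.differentiable (by simp)).differentiableAt
  have s0 : ContDiff ℝ (⊤ : ℕ∞) φ := hφ
  set u1 := pd (1,0,0) φ with hu1
  set u2 := pd (1,0,0) u1 with hu2
  set u3 := pd (1,0,0) u2 with hu3
  set u4 := pd (1,0,0) u3 with hu4
  have s1 : ContDiff ℝ (⊤ : ℕ∞) u1 := pd_contDiff s0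
  have s2 : ContDiff ℝ (⊤ : ℕ∞) u2 := pd_contDiff s1
  have s3 : ContDiff ℝ (⊤ : ℕ∞) u3 := pd_contDiff s2
  -- the Burgers equation in function form, with real scalars
  have hg : pd (0,1,0) φ = fun q => -(u2 q) - (2:ℝ) • (φ q * u1 q) := by
    funext q
    rw [hb1 q]
    norm_num [← Nat.cast_smul_eq_nsmul ℝ]
  have sg : ContDiff ℝ (⊤ : ℕ∞) (fun q => -(u2 q) - (2:ℝ) • (φ q * u1 q)) :=
    s2.neg.sub ((contDiff_matmul s0 s1).const_smul (2:ℝ))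
  -- x-derivative of the Burgers right-hand side
  have hgx : pd (1,0,0) (fun q => -(u2 q) - (2:ℝ) • (φ q * u1 q))
      = fun q => -(u3 q) - (2:ℝ) • (u1 q * u1 q + φ q * u2 q) := by
    funext q
    rw [pd_sub (dd s2.neg q) (dd ((contDiff_matmul s0 s1).const_smul (2:ℝ)) q), pd_neg,
      pd_smul _ (dd (contDiff_matmul s0 s1) q), pd_mul (dd s0 q) (dd s1 q)]
  have sg1 : ContDiff ℝ (⊤ : ℕ∞) (fun q => -(u3 q) - (2:ℝ) • (u1 q * u1 q + φ q * u2 q)) :=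
    s3.neg.sub (((contDiff_matmul s1 s1).add (contDiff_matmul s0 s2)).const_smul (2:ℝ))
  -- second x-derivative of the Burgers right-hand side
  have hgxx : pd (1,0,0) (fun q => -(u3 q) - (2:ℝ) • (u1 q * u1 q + φ q * u2 q))
      = fun q => -(u4 q)
          - (2:ℝ) • ((u2 q * u1 q + u1 q * u2 q) + (u1 q * u2 q + φ q * u3 q)) := by
    funext q
    rw [pd_sub (dd s3.neg q)
        (dd (((contDiff_matmul s1 s1).add (contDiff_matmul s0 s2)).const_smul (2:ℝ)) q),
      pd_neg, pd_smul _ (dd ((contDiff_matmul s1 s1).add (contDiff_matmul s0 s2)) q),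
      pd_add (dd (contDiff_matmul s1 s1) q) (dd (contDiff_matmul s0 s2) q),
      pd_mul (dd s1 q) (dd s1 q), pd_mul (dd s0 q) (dd s2 q)]
  -- Schwarz
  have comm : ∀ (f : ℝ × ℝ × ℝ → Matrix (Fin n) (Fin n) ℝ), ContDiff ℝ (⊤ : ℕ∞) f →
      pd (0,1,0) (pd (1,0,0) f) = pd (1,0,0) (pd (0,1,0) f) :=
    fun f hf => funext fun q => pd_comm hf
  have hy1 : pd (0,1,0) u1 = pd (1,0,0) (fun q => -(u2 q) - (2:ℝ) • (φ q * u1 q)) := by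
    rw [hu1, comm φ s0, hg]
  have hy2 : pd (0,1,0) u2
      = pd (1,0,0) (pd (1,0,0) (fun q => -(u2 q) - (2:ℝ) • (φ q * u1 q))) := by
    rw [hu2, comm u1 s1, hy1]
  -- second y-derivative of φ
  have hyy : pd (0,1,0) (pd (0,1,0) φ) p
      = -(pd (1,0,0) (pd (1,0,0) (fun q => -(u2 q) - (2:ℝ) • (φ q * u1 q))) p)
        - (2:ℝ) • ((-(u2 p) - (2:ℝ) • (φ p * u1 p)) * u1 p
            + φ p * (pd (1,0,0) (fun q => -(u2 q) - (2:ℝ) • (φ q * u1 q)) p)) := by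
    rw [hg]
    rw [pd_sub (dd s2.neg p) (dd ((contDiff_matmul s0 s1).const_smul (2:ℝ)) p), pd_neg,
      pd_smul _ (dd (contDiff_matmul s0 s1) p), pd_mul (dd s0 p) (dd s1 p)]
    rw [hy2, hg, hy1]
  -- time derivative in function form, with real scalars
  have ht : pd (0,0,1) φ = fun q => u3 q + (3:ℝ) • (φ q * u2 q) + (3:ℝ) • (u1 q * u1 q)
      + (3:ℝ) • ((φ q * φ q) * u1 q) := by
    funext q
    rw [hb2 q]
    norm_num [← Nat.cast_smul_eq_nsmul ℝ]
  have sT : ContDiff ℝ (⊤ : ℕ∞) (fun q => u3 q + (3:ℝ) • (φ q * u2 q)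
      + (3:ℝ) • (u1 q * u1 q) + (3:ℝ) • ((φ q * φ q) * u1 q)) :=
    ((s3.add ((contDiff_matmul s0 s2).const_smul (3:ℝ))).add
      ((contDiff_matmul s1 s1).const_smul (3:ℝ))).add
      ((contDiff_matmul (contDiff_matmul s0 s0) s1).const_smul (3:ℝ))
  -- expand the first term of the pKP equation
  have hFx : pd (1,0,0) (fun q => (4:ℝ) • (u3 q + (3:ℝ) • (φ q * u2 q) + (3:ℝ) • (u1 q * u1 q)
        + (3:ℝ) • ((φ q * φ q) * u1 q)) - u3 q - (6:ℝ) • (u1 q * u1 q)) p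
      = (4:ℝ) • (u4 p + (3:ℝ) • (u1 p * u2 p + φ p * u3 p)
          + (3:ℝ) • (u2 p * u1 p + u1 p * u2 p)
          + (3:ℝ) • ((u1 p * φ p + φ p * u1 p) * u1 p + (φ p * φ p) * u2 p))
        - u4 p - (6:ℝ) • (u2 p * u1 p + u1 p * u2 p) := by
    rw [pd_sub (dd ((sT.const_smul (4:ℝ)).sub s3) p)
        (dd ((contDiff_matmul s1 s1).const_smul (6:ℝ)) p),
      pd_sub (dd (sT.const_smul (4:ℝ)) p) (dd s3 p),
      pd_smul _ (dd sT p),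
      pd_add (dd ((s3.add ((contDiff_matmul s0 s2).const_smul (3:ℝ))).add
        ((contDiff_matmul s1 s1).const_smul (3:ℝ))) p)
        (dd ((contDiff_matmul (contDiff_matmul s0 s0) s1).const_smul (3:ℝ)) p),
      pd_add (dd (s3.add ((contDiff_matmul s0 s2).const_smul (3:ℝ))) p)
        (dd ((contDiff_matmul s1 s1).const_smul (3:ℝ)) p),
      pd_add (dd s3 p) (dd ((contDiff_matmul s0 s2).const_smul (3:ℝ)) p),
      pd_smul _ (dd (contDiff_matmul s0 s2) p),
      pd_smul _ (dd (contDiff_matmul s1 s1) p),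
      pd_smul _ (dd (contDiff_matmul (contDiff_matmul s0 s0) s1) p),
      pd_smul _ (dd (contDiff_matmul s1 s1) p),
      pd_mul (dd s0 p) (dd s2 p), pd_mul (dd s1 p) (dd s1 p),
      pd_mul (dd (contDiff_matmul s0 s0) p) (dd s1 p), pd_mul (dd s0 p) (dd s0 p)]
  -- assemble
  simp only [ht] at *
  rw [hFx, hyy, hgx, hgxx, hg]
  simp only [smul_add, smul_sub, smul_neg, smul_smul, mul_add, add_mul, sub_mul, mul_sub,
    mul_neg, neg_mul, mul_smul_comm, smul_mul_assoc, mul_assoc]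
  module
end

section
/- Let M, N be positive integers, R a constant N×N real matrix and Q a constant N×M real matrix. Let X : ℝ³ → (N×N real matrices) be infinitely differentiable with X(x,y,t) invertible for all (x,y,t) and satisfying X_y = X_xx and X_t = X_xxx, and suppose there is an infinitely differentiable Y : ℝ³ → (M×N real matrices) with X_x = R·X + Q·Y. Then ψ := Q·Y·X⁻¹ satisfies the N×N matrix pKP equation with the ordinary matrix product: ∂_x(4ψ_t − ψ_xxx − 6 ψ_x ψ_x) = 3ψ_yy − 6(ψ_x ψ_y − ψ_y ψ_x). -/
attribute [local instance] Matrix.normedAddCommGroup Matrix.normedSpace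

/-!
With `V = X⁻¹` the Riccati relation gives `ψ = X_x V - R`. Every partial derivative of `ψ` is
then a noncommutative polynomial in the `x`-derivatives `∂ₓᵏ X` and in `V`: the heat hierarchy
turns `∂_y` and `∂_t` into `∂ₓ²` and `∂ₓ³` on `X` (and, since mixed partials of the smooth `X`
commute, on each `∂ₓᵏ X`), while `∂V = -V (∂X) V`. Both sides of the pKP equation are therefore
evaluations of formal differential polynomials, and the two polynomials agree in the free
noncommutative ring, whatever values the symbols take.
-/

section DirDeriv

variable {E F : Type*} [NormedAddCommGroup E] [NormedSpace ℝ E]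
  [NormedAddCommGroup F] [NormedSpace ℝ F]

noncomputable def dirDeriv (v : E) (f : E → F) : E → F :=
  fun q => fderiv ℝ f q v

theorem ContDiff.dirDeriv {m n : WithTop ℕ∞} {f : E → F} (hf : ContDiff ℝ n f) (hmn : m + 1 ≤ n)
    (v : E) : ContDiff ℝ m (dirDeriv v f) :=
  (hf.fderiv_right hmn).clm_apply contDiff_const

theorem dirDeriv_comm {f : E → F} (hf : ContDiff ℝ 2 f) (v w : E) :
    dirDeriv w (dirDeriv v f) = dirDeriv v (dirDeriv w f) := by
  have hd : Differentiable ℝ (fderiv ℝ f) :=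
    (hf.fderiv_right (m := 1) le_rfl).differentiable one_ne_zero
  have hflip : ∀ u p, fderiv ℝ (fun q => fderiv ℝ f q u) p = (fderiv ℝ (fderiv ℝ f) p).flip u :=
    fun u p => by simp [fderiv_clm_apply (hd p) (differentiableAt_const u)]
  funext p
  show fderiv ℝ (fun q => fderiv ℝ f q v) p w = fderiv ℝ (fun q => fderiv ℝ f q w) p v
  rw [hflip, hflip]
  exact (hf.contDiffAt.isSymmSndFDerivAt (by simp [minSmoothness_of_isRCLikeNormedField])).eq w v

theorem contDiff_iterate_dirDeriv {f : E → F} (hf : ContDiff ℝ (⊤ : ℕ∞) f) (v : E) (k : ℕ) :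
    ContDiff ℝ (⊤ : ℕ∞) ((dirDeriv v)^[k] f) := by
  induction k with
  | zero => exact hf
  | succ k ih => rw [Function.iterate_succ_apply']; exact ih.dirDeriv (by exact_mod_cast le_top) v

theorem dirDeriv_iterate_of_eq_iterate {f : E → F} (hf : ContDiff ℝ (⊤ : ℕ∞) f) {v w : E} {s : ℕ}
    (h : dirDeriv w f = (dirDeriv v)^[s] f) (k : ℕ) :
    dirDeriv w ((dirDeriv v)^[k] f) = (dirDeriv v)^[k + s] f := by
  induction k with
  | zero => simpa using h
  | succ k ih =>
    rw [Function.iterate_succ_apply', dirDeriv_comm ((contDiff_iterate_dirDeriv hf v k).of_le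
      (WithTop.coe_le_coe.2 le_top)), ih, Nat.add_right_comm, Function.iterate_succ_apply']

end DirDeriv

section MatrixCalculus

variable {E : Type*} [NormedAddCommGroup E] [NormedSpace ℝ E]
  {l m n : Type*} [Fintype l] [Fintype m] [Fintype n]

noncomputable def matrixMulCLM : Matrix l m ℝ →L[ℝ] Matrix m n ℝ →L[ℝ] Matrix l n ℝ :=
  LinearMap.toContinuousLinearMap
    (LinearMap.toContinuousLinearMap.toLinearMap ∘ₗ mulLinearMap ℝ)

theorem DifferentiableAt.matrix_mul {f : E → Matrix l m ℝ} {g : E → Matrix m n ℝ} {p : E}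
    (hf : DifferentiableAt ℝ f p) (hg : DifferentiableAt ℝ g p) :
    DifferentiableAt ℝ (fun q => f q * g q) p :=
  (matrixMulCLM.hasFDerivAt_of_bilinear hf.hasFDerivAt hg.hasFDerivAt).differentiableAt

theorem fderiv_matrix_mul_apply {f : E → Matrix l m ℝ} {g : E → Matrix m n ℝ} {p : E}
    (hf : DifferentiableAt ℝ f p) (hg : DifferentiableAt ℝ g p) (w : E) :
    fderiv ℝ (fun q => f q * g q) p w = fderiv ℝ f p w * g p + f p * fderiv ℝ g p w :=
  (congrArg (· w) ((matrixMulCLM (l := l) (m := m) (n := n)).fderiv_of_bilinear hf hg)).trans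
    (add_comm _ _)

theorem ContDiff.matrix_det {k : WithTop ℕ∞} [DecidableEq n] {f : E → Matrix n n ℝ}
    (hf : ContDiff ℝ k f) : ContDiff ℝ k fun q => (f q).det := by
  have hentry : ∀ i j, ContDiff ℝ k fun q => f q i j := fun i j =>
    contDiff_pi.1 (contDiff_pi.1 hf i) j
  simp only [Matrix.det_apply']
  exact ContDiff.sum fun σ _ => contDiff_const.mul (contDiff_prod fun i _ => hentry (σ i) i)

theorem ContDiff.matrix_adjugate {k : WithTop ℕ∞} [DecidableEq n] {f : E → Matrix n n ℝ}
    (hf : ContDiff ℝ k f) : ContDiff ℝ k fun q => (f q).adjugate := by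
  refine contDiff_pi.2 fun i => contDiff_pi.2 fun j => ?_
  simp only [Matrix.adjugate_apply]
  refine ContDiff.matrix_det (contDiff_pi.2 fun a => contDiff_pi.2 fun b => ?_)
  simp only [Matrix.updateRow_apply]
  split_ifs
  · exact contDiff_const
  · exact contDiff_pi.1 (contDiff_pi.1 hf a) b

theorem ContDiff.matrix_inv {k : WithTop ℕ∞} [DecidableEq n] {f : E → Matrix n n ℝ}
    (hf : ContDiff ℝ k f) (h : ∀ q, IsUnit (f q).det) : ContDiff ℝ k fun q => (f q)⁻¹ := by
  simp only [Matrix.inv_def, Ring.inverse_eq_inv']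
  exact (hf.matrix_det.inv fun q => (h q).ne_zero).smul hf.matrix_adjugate

theorem fderiv_matrix_inv_apply [DecidableEq n] {f : E → Matrix n n ℝ} {p : E}
    (hf : DifferentiableAt ℝ f p) (hf' : DifferentiableAt ℝ (fun q => (f q)⁻¹) p)
    (h : ∀ q, IsUnit (f q).det) (w : E) :
    fderiv ℝ (fun q => (f q)⁻¹) p w = -((f p)⁻¹ * fderiv ℝ f p w * (f p)⁻¹) := by
  have hprod : fderiv ℝ f p w * (f p)⁻¹ + f p * fderiv ℝ (fun q => (f q)⁻¹) p w = 0 := by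
    rw [← fderiv_matrix_mul_apply hf hf']
    simp [Matrix.mul_nonsing_inv _ (h _)]
  calc fderiv ℝ (fun q => (f q)⁻¹) p w
      = (f p)⁻¹ * (f p * fderiv ℝ (fun q => (f q)⁻¹) p w) := by
        rw [← Matrix.mul_assoc, Matrix.nonsing_inv_mul _ (h p), Matrix.one_mul]
    _ = -((f p)⁻¹ * fderiv ℝ f p w * (f p)⁻¹) := by
        rw [eq_neg_of_add_eq_zero_right hprod, Matrix.mul_neg, Matrix.mul_assoc]

end MatrixCalculus

/-- Noncommutative differential polynomials with constant matrix coefficients in the symbols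
`D k`, standing for `∂ₓᵏ X`, and `V`, standing for `X⁻¹`. -/
inductive DiffPoly (ι : Type*)
  | D : ℕ → DiffPoly ι
  | V : DiffPoly ι
  | C : Matrix ι ι ℝ → DiffPoly ι
  | add : DiffPoly ι → DiffPoly ι → DiffPoly ι
  | sub : DiffPoly ι → DiffPoly ι → DiffPoly ι
  | neg : DiffPoly ι → DiffPoly ι
  | mul : DiffPoly ι → DiffPoly ι → DiffPoly ι
  | smul : ℝ → DiffPoly ι → DiffPoly ι

namespace DiffPoly

variable {ι : Type*}

instance : Add (DiffPoly ι) := ⟨add⟩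
instance : Sub (DiffPoly ι) := ⟨sub⟩
instance : Neg (DiffPoly ι) := ⟨neg⟩
instance : Mul (DiffPoly ι) := ⟨mul⟩
instance : SMul ℝ (DiffPoly ι) := ⟨smul⟩

/-- The derivative along the `s`-th time of the heat hierarchy `∂X/∂tₛ = ∂ₓˢ X`, where
`(x, y, t) = (t₁, t₂, t₃)`. -/
def der (s : ℕ) : DiffPoly ι → DiffPoly ι
  | D k => D (k + s)
  | V => -(V * D s * V)
  | C _ => C 0
  | add a b => der s a + der s b
  | sub a b => der s a - der s b
  | neg a => -der s a
  | mul a b => der s a * b + a * der s b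
  | smul c a => c • der s a

section der

variable (s : ℕ) (a b : DiffPoly ι)

@[simp] theorem der_D (k : ℕ) : der s (D k : DiffPoly ι) = D (k + s) := rfl
@[simp] theorem der_V : der s (V : DiffPoly ι) = -(V * D s * V) := rfl
@[simp] theorem der_C (c : Matrix ι ι ℝ) : der s (C c) = C 0 := rfl
@[simp] theorem der_add : der s (a + b) = der s a + der s b := rfl
@[simp] theorem der_sub : der s (a - b) = der s a - der s b := rfl
@[simp] theorem der_neg : der s (-a) = -der s a := rfl
@[simp] theorem der_mul : der s (a * b) = der s a * b + a * der s b := rfl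
@[simp] theorem der_smul (c : ℝ) : der s (c • a) = c • der s a := rfl

end der

def coleHopf (R : Matrix ι ι ℝ) : DiffPoly ι :=
  D 1 * V - C R

def pKPFlux (u : DiffPoly ι) : DiffPoly ι :=
  (4 : ℝ) • der 3 u - der 1 (der 1 (der 1 u)) - (6 : ℝ) • (der 1 u * der 1 u)

variable [Fintype ι] {E : Type*}

noncomputable def eval (Xs : ℕ → E → Matrix ι ι ℝ) (W : E → Matrix ι ι ℝ) :
    DiffPoly ι → E → Matrix ι ι ℝ
  | D k => Xs k
  | V => W
  | C c => fun _ => c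
  | add a b => fun q => eval Xs W a q + eval Xs W b q
  | sub a b => fun q => eval Xs W a q - eval Xs W b q
  | neg a => fun q => -eval Xs W a q
  | mul a b => fun q => eval Xs W a q * eval Xs W b q
  | smul c a => fun q => c • eval Xs W a q

section eval

variable (Xs : ℕ → E → Matrix ι ι ℝ) (W : E → Matrix ι ι ℝ) (a b : DiffPoly ι) (q : E)

@[simp] theorem eval_C (c : Matrix ι ι ℝ) : (C c).eval Xs W q = c := rfl
@[simp] theorem eval_add : (a + b).eval Xs W q = a.eval Xs W q + b.eval Xs W q := rfl
@[simp] theorem eval_sub : (a - b).eval Xs W q = a.eval Xs W q - b.eval Xs W q := rfl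
@[simp] theorem eval_neg : (-a).eval Xs W q = -a.eval Xs W q := rfl
@[simp] theorem eval_mul : (a * b).eval Xs W q = a.eval Xs W q * b.eval Xs W q := rfl
@[simp] theorem eval_smul (c : ℝ) : (c • a).eval Xs W q = c • a.eval Xs W q := rfl

end eval

theorem eval_der_pKPFlux_coleHopf (Xs : ℕ → E → Matrix ι ι ℝ) (W : E → Matrix ι ι ℝ)
    (R : Matrix ι ι ℝ) (q : E) :
    (der 1 (pKPFlux (coleHopf R))).eval Xs W q
      = (3 : ℝ) • (der 2 (der 2 (coleHopf R))).eval Xs W q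
        - (6 : ℝ) • ((der 1 (coleHopf R)).eval Xs W q * (der 2 (coleHopf R)).eval Xs W q
          - (der 2 (coleHopf R)).eval Xs W q * (der 1 (coleHopf R)).eval Xs W q) := by
  simp only [pKPFlux, coleHopf, der_D, der_V, der_C, der_add, der_sub, der_neg, der_mul, der_smul,
    eval_C, eval_add, eval_sub, eval_neg, eval_mul, eval_smul, ofNat_smul_eq_nsmul]
  noncomm_ring

variable [NormedAddCommGroup E] [NormedSpace ℝ E] {Xs : ℕ → E → Matrix ι ι ℝ}
  {W : E → Matrix ι ι ℝ}

theorem differentiable_eval (hXs : ∀ k, Differentiable ℝ (Xs k)) (hW : Differentiable ℝ W) :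
    ∀ e : DiffPoly ι, Differentiable ℝ (e.eval Xs W)
  | D k => hXs k
  | V => hW
  | C _ => differentiable_const _
  | add a b => (differentiable_eval hXs hW a).add (differentiable_eval hXs hW b)
  | sub a b => (differentiable_eval hXs hW a).sub (differentiable_eval hXs hW b)
  | neg a => (differentiable_eval hXs hW a).neg
  | mul a b => fun q =>
      (differentiable_eval hXs hW a q).matrix_mul (differentiable_eval hXs hW b q)
  | smul c a => (differentiable_eval hXs hW a).const_smul c

theorem dirDeriv_eval (hXs : ∀ k, Differentiable ℝ (Xs k)) (hW : Differentiable ℝ W)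
    {w : E} {s : ℕ} (hD : ∀ k, dirDeriv w (Xs k) = Xs (k + s))
    (hV : dirDeriv w W = fun q => -(W q * Xs s q * W q)) :
    ∀ e : DiffPoly ι, dirDeriv w (e.eval Xs W) = (e.der s).eval Xs W
  | D k => hD k
  | V => hV
  | C _ => funext fun q => by simp [dirDeriv, eval, der]
  | add a b => funext fun q =>
    (congrArg (· w) (fderiv_fun_add (differentiable_eval hXs hW a q)
      (differentiable_eval hXs hW b q))).trans
    (congrArg₂ (· + ·) (congrFun (dirDeriv_eval hXs hW hD hV a) q)
      (congrFun (dirDeriv_eval hXs hW hD hV b) q))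
  | sub a b => funext fun q =>
    (congrArg (· w) (fderiv_fun_sub (differentiable_eval hXs hW a q)
      (differentiable_eval hXs hW b q))).trans
    (congrArg₂ (· - ·) (congrFun (dirDeriv_eval hXs hW hD hV a) q)
      (congrFun (dirDeriv_eval hXs hW hD hV b) q))
  | neg a => funext fun q =>
    (congrArg (· w) (fderiv_fun_neg (𝕜 := ℝ) (f := eval Xs W a) (x := q))).trans
    (congrArg (- ·) (congrFun (dirDeriv_eval hXs hW hD hV a) q))
  | mul a b => funext fun q =>
    (fderiv_matrix_mul_apply (differentiable_eval hXs hW a q)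
      (differentiable_eval hXs hW b q) w).trans
    (congrArg₂ (· + ·)
      (congrArg (· * eval Xs W b q) (congrFun (dirDeriv_eval hXs hW hD hV a) q))
      (congrArg (eval Xs W a q * ·) (congrFun (dirDeriv_eval hXs hW hD hV b) q)))
  | smul c a => funext fun q =>
    (congrArg (· w) (fderiv_const_smul (differentiable_eval hXs hW a q) c)).trans
    (congrArg (c • ·) (congrFun (dirDeriv_eval hXs hW hD hV a) q))

theorem dirDeriv_eval_of_dirDeriv_eq_iterate [DecidableEq ι] {X : E → Matrix ι ι ℝ}
    (hX : ContDiff ℝ (⊤ : ℕ∞) X) (hdet : ∀ q, IsUnit (X q).det) {v w : E} {s : ℕ}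
    (h : dirDeriv w X = (dirDeriv v)^[s] X) (e : DiffPoly ι) :
    dirDeriv w (e.eval (fun k => (dirDeriv v)^[k] X) fun q => (X q)⁻¹)
      = (e.der s).eval (fun k => (dirDeriv v)^[k] X) fun q => (X q)⁻¹ := by
  have hXs : ∀ k, Differentiable ℝ ((dirDeriv v)^[k] X) := fun k =>
    (contDiff_iterate_dirDeriv hX v k).differentiable (by simp)
  have hinv : Differentiable ℝ fun q => (X q)⁻¹ := (hX.matrix_inv hdet).differentiable (by simp)
  refine dirDeriv_eval hXs hinv (dirDeriv_iterate_of_eq_iterate hX h) (funext fun q => ?_) e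
  exact (fderiv_matrix_inv_apply (hX.differentiable (by simp) q) (hinv q) hdet w).trans
    (congrArg (fun A => -((X q)⁻¹ * A * (X q)⁻¹)) (congrFun h q))

end DiffPoly

theorem matrix_pKP_coleHopf_square_general (M N : ℕ)
    (R : Matrix (Fin N) (Fin N) ℝ) (Q : Matrix (Fin N) (Fin M) ℝ)
    (X : ℝ × ℝ × ℝ → Matrix (Fin N) (Fin N) ℝ)
    (Y : ℝ × ℝ × ℝ → Matrix (Fin M) (Fin N) ℝ)
    (hX : ContDiff ℝ (⊤ : ℕ∞) X)
    (hXinv : ∀ p, IsUnit (X p))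
    (hX2 : ∀ p, pdy X p = pdx (pdx X) p)
    (hX3 : ∀ p, pdt X p = pdx (pdx (pdx X)) p)
    (hRic : ∀ p, pdx X p = R * X p + Q * Y p)
    (ψ : ℝ × ℝ × ℝ → Matrix (Fin N) (Fin N) ℝ)
    (hψ : ∀ p, ψ p = Q * Y p * (X p)⁻¹) :
    ∀ p, pdx (fun q => (4 : ℝ) • pdt ψ q - pdx (pdx (pdx ψ)) q
          - (6 : ℝ) • (pdx ψ q * pdx ψ q)) p
        = (3 : ℝ) • pdy (pdy ψ) p
          - (6 : ℝ) • (pdx ψ p * pdy ψ p - pdy ψ p * pdx ψ p) := by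
  have hdet : ∀ p, IsUnit (X p).det := fun p => (Matrix.isUnit_iff_isUnit_det _).1 (hXinv p)
  set Xs : ℕ → ℝ × ℝ × ℝ → Matrix (Fin N) (Fin N) ℝ := fun k => (dirDeriv (1, 0, 0))^[k] X
  set W : ℝ × ℝ × ℝ → Matrix (Fin N) (Fin N) ℝ := fun p => (X p)⁻¹
  have hx : ∀ e : DiffPoly (Fin N), pdx (e.eval Xs W) = (e.der 1).eval Xs W :=
    DiffPoly.dirDeriv_eval_of_dirDeriv_eq_iterate hX hdet rfl
  have hy : ∀ e : DiffPoly (Fin N), pdy (e.eval Xs W) = (e.der 2).eval Xs W :=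
    DiffPoly.dirDeriv_eval_of_dirDeriv_eq_iterate hX hdet (funext hX2)
  have ht : ∀ e : DiffPoly (Fin N), pdt (e.eval Xs W) = (e.der 3).eval Xs W :=
    DiffPoly.dirDeriv_eval_of_dirDeriv_eq_iterate hX hdet (funext hX3)
  have hψeval : ψ = (DiffPoly.coleHopf R).eval Xs W := by
    funext p
    rw [hψ, eq_sub_of_add_eq' (hRic p).symm, Matrix.sub_mul, Matrix.mul_assoc,
      Matrix.mul_nonsing_inv _ (hdet p), Matrix.mul_one]
    rfl
  subst hψeval
  intro p
  simp only [hx, hy, ht]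
  exact (congrFun (hx (DiffPoly.pKPFlux (DiffPoly.coleHopf R))) p).trans
    (DiffPoly.eval_der_pKPFlux_coleHopf Xs W R p)

/-- Corollary: if `X` solves the heat hierarchy and `X_x = R X + Q Y` for some
smooth `Y`, then `ψ = Q Y X⁻¹` solves the `N × N` matrix pKP equation with the
ordinary matrix product. -/
theorem matrix_pKP_coleHopf_square (M N : ℕ) (hM : 0 < M) (hN : 0 < N)
    (R : Matrix (Fin N) (Fin N) ℝ) (Q : Matrix (Fin N) (Fin M) ℝ)
    (X : ℝ × ℝ × ℝ → Matrix (Fin N) (Fin N) ℝ)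
    (Y : ℝ × ℝ × ℝ → Matrix (Fin M) (Fin N) ℝ)
    (hX : ContDiff ℝ (⊤ : ℕ∞) X) (hY : ContDiff ℝ (⊤ : ℕ∞) Y)
    (hXinv : ∀ p, IsUnit (X p))
    (hX2 : ∀ p, pdy X p = pdx (pdx X) p)
    (hX3 : ∀ p, pdt X p = pdx (pdx (pdx X)) p)
    (hRic : ∀ p, pdx X p = R * X p + Q * Y p)
    (ψ : ℝ × ℝ × ℝ → Matrix (Fin N) (Fin N) ℝ)
    (hψ : ∀ p, ψ p = Q * Y p * (X p)⁻¹) :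
    ∀ p, pdx (fun q => (4 : ℝ) • pdt ψ q - pdx (pdx (pdx ψ)) q
          - (6 : ℝ) • (pdx ψ q * pdx ψ q)) p
        = (3 : ℝ) • pdy (pdy ψ) p
          - (6 : ℝ) • (pdx ψ p * pdy ψ p - pdy ψ p * pdx ψ p) :=
  matrix_pKP_coleHopf_square_general M N R Q X Y hX hXinv hX2 hX3 hRic ψ hψ
end
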